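/- For every integer k ≥ 1, let F_k be the forest on 3k vertices consisting of the disjoint union of a star with center u and k+1 leaves u_1,…,u_{k+1} together with k−1 pairwise disjoint edges x_1y_1,…,x_{k−1}y_{k−1}. Then F_k is not equitably DP 3-colorable; that is, there exists a 3-cover H of F_k admitting no k-bounded H-coloring. -/

import Mathlib

/-- A DP-cover (correspondence cover) of a graph `G` with colors in `Γ`:
lists `L v`, and a symmetric adjacency relation between nodes `(v, γ)`
that projects to edges of `G` and is a partial matching between fibers. -/
structure DPCover {V : Type*} (G : SimpleGraph V) (Γ : Type*) where
  L : V → Finset Γ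
  Adj : V × Γ → V × Γ → Prop
  symm : ∀ p q, Adj p q → Adj q p
  adj_sub : ∀ u α w β, Adj (u, α) (w, β) → G.Adj u w ∧ α ∈ L u ∧ β ∈ L w
  matching : ∀ u α w β β', Adj (u, α) (w, β) → Adj (u, α) (w, β') → β = β'

/-- `H` is a `k`-cover: every list has size `k`. -/
def DPCover.IsKCover {V Γ : Type*} {G : SimpleGraph V} (H : DPCover G Γ) (k : ℕ) : Prop :=
  ∀ v, (H.L v).card = k

/-- An `H`-coloring: a choice from every list whose graph is independent in the cover. -/
def DPCover.IsColoring {V Γ : Type*} {G : SimpleGraph V} (H : DPCover G Γ) (f : V → Γ) : Prop :=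
  (∀ v, f v ∈ H.L v) ∧ ∀ u w, ¬ H.Adj (u, f u) (w, f w)

/-- The size of the color class of `γ` under `f`. -/
def classSize {V Γ : Type*} [Fintype V] [DecidableEq Γ] (f : V → Γ) (γ : Γ) : ℕ :=
  (Finset.univ.filter fun v => f v = γ).card

/-- Every color class has size at most `m`. -/
def IsBounded {V Γ : Type*} [Fintype V] [DecidableEq Γ] (m : ℕ) (f : V → Γ) : Prop :=
  ∀ γ, classSize f γ ≤ m

/-- `f` is `⌈n/k⌉`-bounded and at most `n % k` color classes have size `⌊n/k⌋ + 1`. -/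
def IsStronglyBounded {V Γ : Type*} [Fintype V] [DecidableEq Γ] (n k : ℕ) (f : V → Γ) : Prop :=
  IsBounded ((n + k - 1) / k) f ∧
  ((Finset.univ.image f).filter fun γ => classSize f γ = n / k + 1).card ≤ n % k

/-- `G` is equitably DP `k`-colorable: every `k`-cover admits a `⌈n/k⌉`-bounded coloring. -/
def EDPColorable {V : Type*} [Fintype V] (G : SimpleGraph V) (k : ℕ) : Prop :=
  ∀ H : DPCover G ℕ, H.IsKCover k →
    ∃ f, H.IsColoring f ∧ IsBounded ((Fintype.card V + k - 1) / k) f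

/-- `G` is strongly equitably DP `k`-colorable: every `k`-cover admits a strongly
`⌈n/k⌉`-bounded coloring. -/
def SEDPColorable {V : Type*} [Fintype V] (G : SimpleGraph V) (k : ℕ) : Prop :=
  ∀ H : DPCover G ℕ, H.IsKCover k →
    ∃ f, H.IsColoring f ∧ IsStronglyBounded (Fintype.card V) k f

/-- The forest `F_k` on `3k` vertices: a star with center `0` and leaves `1, …, k+1`,
together with the `k-1` disjoint edges `{k+2+2i, k+3+2i}` for `0 ≤ i < k-1`. -/
def Fforest (k : ℕ) : SimpleGraph (Fin (3 * k)) :=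
  SimpleGraph.fromRel (fun a b =>
    (a.val = 0 ∧ 1 ≤ b.val ∧ b.val ≤ k + 1) ∨
    (∃ i : ℕ, i < k - 1 ∧ a.val = k + 2 + 2 * i ∧ b.val = k + 3 + 2 * i))

/-- The bad 3-cover of `Fforest k`. -/
def badCover (k : ℕ) : DPCover (Fforest k) ℕ where
  L := fun _ => {0, 1, 2}
  Adj := fun p q =>
    p.2 < 3 ∧ q.2 < 3 ∧ (
      (p.1.val = 0 ∧ 1 ≤ q.1.val ∧ q.1.val ≤ k + 1 ∧ q.2 = (p.2 + 1) % 3) ∨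
      (q.1.val = 0 ∧ 1 ≤ p.1.val ∧ p.1.val ≤ k + 1 ∧ p.2 = (q.2 + 1) % 3) ∨
      ((∃ i : ℕ, i < k - 1 ∧ ((p.1.val = k + 2 + 2 * i ∧ q.1.val = k + 3 + 2 * i) ∨
          (q.1.val = k + 2 + 2 * i ∧ p.1.val = k + 3 + 2 * i))) ∧ p.2 = q.2))
  symm := by
    rintro ⟨u, α⟩ ⟨w, β⟩ ⟨hα, hβ, h⟩
    refine ⟨hβ, hα, ?_⟩
    rcases h with h | h | ⟨⟨i, hi, h⟩, he⟩
    · exact Or.inr (Or.inl h)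
    · exact Or.inl h
    · exact Or.inr (Or.inr ⟨⟨i, hi, h.symm⟩, he.symm⟩)
  adj_sub := by
    rintro ⟨u, hu⟩ α ⟨w, hw⟩ β ⟨hα, hβ, h⟩
    dsimp only at hα hβ h ⊢
    have hmem : ∀ x : ℕ, x < 3 → x ∈ ({0, 1, 2} : Finset ℕ) := by
      intro x hx
      simp only [Finset.mem_insert, Finset.mem_singleton]
      omega
    refine ⟨?_, hmem α hα, hmem β hβ⟩
    rw [Fforest, SimpleGraph.fromRel_adj]
    have hne : ∀ (hne' : u ≠ w), (⟨u, hu⟩ : Fin (3 * k)) ≠ ⟨w, hw⟩ := by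
      intro hne' hcon
      exact hne' (congrArg Fin.val hcon)
    rcases h with ⟨h1, h2, h3, _⟩ | ⟨h1, h2, h3, _⟩ | ⟨⟨i, hi, ⟨h1, h2⟩ | ⟨h1, h2⟩⟩, _⟩
    · exact ⟨hne (by omega), Or.inl (Or.inl ⟨h1, h2, h3⟩)⟩
    · exact ⟨hne (by omega), Or.inr (Or.inl ⟨h1, h2, h3⟩)⟩
    · exact ⟨hne (by omega), Or.inl (Or.inr ⟨i, hi, h1, h2⟩)⟩
    · exact ⟨hne (by omega), Or.inr (Or.inr ⟨i, hi, h1, h2⟩)⟩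
  matching := by
    rintro ⟨u, hu⟩ α ⟨w, hw⟩ β β' ⟨hα, hβ, h⟩ ⟨-, hβ', h'⟩
    dsimp only at hα hβ hβ' h h' ⊢
    rcases h with ⟨a1, a2, a3, a4⟩ | ⟨a1, a2, a3, a4⟩ | ⟨⟨i, hi, ⟨a1, a2⟩ | ⟨a1, a2⟩⟩, a4⟩ <;>
      rcases h' with ⟨b1, b2, b3, b4⟩ | ⟨b1, b2, b3, b4⟩ | ⟨⟨j, hj, ⟨b1, b2⟩ | ⟨b1, b2⟩⟩, b4⟩ <;>
      omega

/-- For every `k ≥ 1`, the forest `F_k` (a star with `k+1` leaves plus `k-1`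
disjoint edges) is not equitably DP 3-colorable: some 3-cover admits no
`k`-bounded coloring. -/
theorem Fforest_not_EDP_three_colorable (k : ℕ) (hk : 1 ≤ k) :
    ¬ EDPColorable (Fforest k) 3 := by
  intro hEDP
  have hkc : (badCover k).IsKCover 3 := by
    intro v
    rfl
  obtain ⟨f, ⟨hmem, hnadj⟩, hb⟩ := hEDP (badCover k) hkc
  -- every color is < 3
  have hlt : ∀ v, f v < 3 := by
    intro v
    have := hmem v
    simp only [badCover, Finset.mem_insert, Finset.mem_singleton] at this
    omega
  -- the bound is k
  have hb' : ∀ γ, classSize f γ ≤ k := by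
    intro γ
    have := hb γ
    rwa [Fintype.card_fin, show (3 * k + 3 - 1) / 3 = k by omega] at this
  -- center vertex
  have h0 : (0 : ℕ) < 3 * k := by omega
  have hc3 : f ⟨0, h0⟩ < 3 := hlt _
  -- leaves avoid (f v0 + 1) % 3
  have hstar : ∀ v : Fin (3 * k), 1 ≤ v.val → v.val ≤ k + 1 →
      f v ≠ (f ⟨0, h0⟩ + 1) % 3 := by
    intro v h1 h2 hEq
    exact hnadj ⟨0, h0⟩ v ⟨hc3, hlt v, Or.inl ⟨rfl, h1, h2, hEq⟩⟩
  -- matched pairs get distinct colors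
  have hedge : ∀ (v w : Fin (3 * k)) (i : ℕ), i < k - 1 →
      v.val = k + 2 + 2 * i → w.val = k + 3 + 2 * i → f v ≠ f w := by
    intro v w i hi hv hw hEq
    exact hnadj v w ⟨hlt v, hlt w, Or.inr (Or.inr ⟨⟨i, hi, Or.inl ⟨hv, hw⟩⟩, hEq⟩)⟩
  -- the class of (f v0 + 1) % 3 lives on the matched pairs
  have hShigh : ∀ v ∈ Finset.univ.filter (fun v => f v = (f ⟨0, h0⟩ + 1) % 3),
      k + 2 ≤ v.val := by
    intro v hv
    rw [Finset.mem_filter] at hv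
    by_contra hcon
    push_neg at hcon
    rcases Nat.eq_zero_or_pos v.val with h | h
    · have hveq : v = ⟨0, h0⟩ := Fin.ext h
      rw [hveq] at hv
      omega
    · exact hstar v h (by omega) hv.2
  have hScard : (Finset.univ.filter (fun v => f v = (f ⟨0, h0⟩ + 1) % 3)).card ≤ k - 1 := by
    have hle := Finset.card_le_card_of_injOn
      (fun v : Fin (3 * k) => (v.val - (k + 2)) / 2)
      (s := Finset.univ.filter (fun v => f v = (f ⟨0, h0⟩ + 1) % 3))
      (t := Finset.range (k - 1))
      (by
        intro v hv
        have h1 := hShigh v hv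
        have h2 := v.isLt
        simp only [Finset.mem_coe, Finset.mem_range]
        omega)
      (by
        intro v hv w hw hvw
        by_contra hne
        have h1 := hShigh v hv
        have h2 := hShigh w hw
        have h3 := v.isLt
        have h4 := w.isLt
        have hvd : f v = (f ⟨0, h0⟩ + 1) % 3 := (Finset.mem_filter.mp hv).2
        have hwd : f w = (f ⟨0, h0⟩ + 1) % 3 := (Finset.mem_filter.mp hw).2
        have hvalne : v.val ≠ w.val := fun h => hne (Fin.ext h)
        dsimp only at hvw
        obtain ⟨i, hik, hor⟩ : ∃ i : ℕ, i < k - 1 ∧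
            ((v.val = k + 2 + 2 * i ∧ w.val = k + 3 + 2 * i) ∨
             (w.val = k + 2 + 2 * i ∧ v.val = k + 3 + 2 * i)) := by
          refine ⟨(v.val - (k + 2)) / 2, by omega, by omega⟩
        rcases hor with ⟨ha, hb2⟩ | ⟨ha, hb2⟩
        · exact hedge v w i hik ha hb2 (by rw [hvd, hwd])
        · exact hedge w v i hik ha hb2 (by rw [hvd, hwd]))
    simpa using hle
  -- the three classes cover everything
  have hcover : (Finset.univ : Finset (Fin (3 * k))) =
      (Finset.univ.filter (fun v => f v = f ⟨0, h0⟩)) ∪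
      (Finset.univ.filter (fun v => f v = (f ⟨0, h0⟩ + 1) % 3)) ∪
      (Finset.univ.filter (fun v => f v = (f ⟨0, h0⟩ + 2) % 3)) := by
    ext v
    simp only [Finset.mem_union, Finset.mem_filter, Finset.mem_univ, true_and, iff_true, true_iff]
    have := hlt v
    omega
  have htot : 3 * k ≤ classSize f (f ⟨0, h0⟩) +
      classSize f ((f ⟨0, h0⟩ + 1) % 3) + classSize f ((f ⟨0, h0⟩ + 2) % 3) := by
    have h1 : (Finset.univ : Finset (Fin (3 * k))).card = 3 * k := by simp
    calc 3 * k = ((Finset.univ.filter (fun v => f v = f ⟨0, h0⟩)) ∪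
          (Finset.univ.filter (fun v => f v = (f ⟨0, h0⟩ + 1) % 3)) ∪
          (Finset.univ.filter (fun v => f v = (f ⟨0, h0⟩ + 2) % 3))).card := by
            rw [← hcover, h1]
      _ ≤ ((Finset.univ.filter (fun v => f v = f ⟨0, h0⟩)) ∪
          (Finset.univ.filter (fun v => f v = (f ⟨0, h0⟩ + 1) % 3))).card +
          (Finset.univ.filter (fun v => f v = (f ⟨0, h0⟩ + 2) % 3)).card :=
            Finset.card_union_le _ _
      _ ≤ (Finset.univ.filter (fun v => f v = f ⟨0, h0⟩)).card +
          (Finset.univ.filter (fun v => f v = (f ⟨0, h0⟩ + 1) % 3)).card +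
          (Finset.univ.filter (fun v => f v = (f ⟨0, h0⟩ + 2) % 3)).card := by
            have := Finset.card_union_le
              (Finset.univ.filter (fun v => f v = f ⟨0, h0⟩))
              (Finset.univ.filter (fun v => f v = (f ⟨0, h0⟩ + 1) % 3))
            omega
      _ = _ := rfl
  have hdS : classSize f ((f ⟨0, h0⟩ + 1) % 3) =
      (Finset.univ.filter (fun v => f v = (f ⟨0, h0⟩ + 1) % 3)).card := rfl
  have h1 := hb' (f ⟨0, h0⟩)
  have h2 := hb' ((f ⟨0, h0⟩ + 2) % 3)
  omega
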